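/- Let φ_l⁺(u) = -ρ_l⁺(u)^{-1}[u + (l+1)/2], where [x] = q^{-x}-q^{x}, ρ_l⁺(u) means ρ_l⁺(q^{2u}) with ρ_l⁺(z) = q^{l/2}(q^{l+3}z^{-1};q⁴)_∞(q^{-l+1}z^{-1};q⁴)_∞ / ((q^{3-l}z^{-1};q⁴)_∞(q^{l+1}z^{-1};q⁴)_∞). Then φ_l⁺(u)·φ_l⁺(u-1) = [u - (l+1)/2][u + (l+1)/2]. -/

import Mathlib

open Complex

/-- `br lq x = q^{-x} - q^{x}` where `q^{x} := exp (x * lq)`. -/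
noncomputable def br (lq x : ℂ) : ℂ := Complex.exp (-x * lq) - Complex.exp (x * lq)

/-- Infinite q-shifted factorial `(a;x)_∞ = ∏_{k≥0} (1 - a x^k)`. -/
noncomputable def pochInf (a x : ℂ) : ℂ := ∏' k : ℕ, (1 - a * x ^ k)

/-- `ρ_l⁺(u) := ρ_l⁺(q^{2u})` with
`ρ_l⁺(z) = q^{l/2}(q^{l+3}z⁻¹;q⁴)_∞(q^{-l+1}z⁻¹;q⁴)_∞/((q^{3-l}z⁻¹;q⁴)_∞(q^{l+1}z⁻¹;q⁴)_∞)`. -/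
noncomputable def rhoLPlusU (q lq : ℂ) (l : ℕ) (u : ℂ) : ℂ :=
  Complex.exp (((l : ℂ) / 2) * lq) *
    pochInf (q ^ ((l : ℤ) + 3) * (Complex.exp (2 * u * lq))⁻¹) (q ^ 4) *
    pochInf (q ^ (1 - (l : ℤ)) * (Complex.exp (2 * u * lq))⁻¹) (q ^ 4) /
    (pochInf (q ^ (3 - (l : ℤ)) * (Complex.exp (2 * u * lq))⁻¹) (q ^ 4) *
      pochInf (q ^ ((l : ℤ) + 1) * (Complex.exp (2 * u * lq))⁻¹) (q ^ 4))

/-- `φ_l⁺(u) = -ρ_l⁺(u)⁻¹ [u + (l+1)/2]`. -/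
noncomputable def phiLPlus (q lq : ℂ) (l : ℕ) (u : ℂ) : ℂ :=
  -(rhoLPlusU q lq l u)⁻¹ * br lq (u + ((l : ℂ) + 1) / 2)

lemma multipliable_poch (a x : ℂ) (hx : ‖x‖ < 1) :
    Multipliable (fun k : ℕ => 1 - a * x ^ k) := by
  by_cases h : ∀ k : ℕ, 1 - a * x ^ k ≠ 0
  · apply Complex.multipliable_of_summable_log
    have hg : Summable (fun k : ℕ => (3/2 : ℝ) * (‖a‖ * ‖x‖ ^ k)) :=
      ((summable_geometric_of_lt_one (norm_nonneg x) hx).mul_left ‖a‖).mul_left _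
    apply Summable.of_norm_bounded_eventually_nat hg
    have h0 : Filter.Tendsto (fun k : ℕ => ‖a‖ * ‖x‖ ^ k) Filter.atTop (nhds 0) := by
      simpa using (tendsto_pow_atTop_nhds_zero_of_lt_one (by positivity) hx).const_mul ‖a‖
    filter_upwards [h0.eventually_le_const (by norm_num : (0:ℝ) < 1/2)] with k hk
    have hb : ‖-(a * x ^ k)‖ ≤ 1/2 := by simpa [norm_mul] using hk
    calc ‖Complex.log (1 - a * x ^ k)‖ = ‖Complex.log (1 + -(a * x ^ k))‖ := by ring_nf
      _ ≤ 3/2 * ‖-(a * x ^ k)‖ := Complex.norm_log_one_add_half_le_self hb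
      _ = 3/2 * (‖a‖ * ‖x‖ ^ k) := by simp [norm_mul]
  · push_neg at h
    obtain ⟨k0, hk0⟩ := h
    refine ⟨0, ?_⟩
    have he : (fun s : Finset ℕ => ∏ b ∈ s, (1 - a * x ^ b)) =ᶠ[Filter.atTop]
        (fun _ => 0) := by
      filter_upwards [Filter.eventually_ge_atTop ({k0} : Finset ℕ)] with s hs
      exact Finset.prod_eq_zero (hs (Finset.mem_singleton_self k0)) hk0
    exact Filter.Tendsto.congr' he.symm tendsto_const_nhds

lemma poch_step (a x : ℂ) (hx : ‖x‖ < 1) :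
    pochInf a x = (1 - a) * pochInf (a * x) x := by
  have hm : Multipliable (fun n : ℕ => 1 - a * x ^ (n + 1)) :=
    (multipliable_poch (a * x) x hx).congr fun k => by rw [pow_succ]; ring
  simp only [pochInf]
  rw [tprod_eq_zero_mul' (f := fun k : ℕ => 1 - a * x ^ k) hm]
  simp only [pow_zero, mul_one]
  congr 1
  exact tprod_congr fun k => by rw [pow_succ]; ring

set_option maxHeartbeats 1600000 in
theorem stmt6 (q lq : ℂ) (hq : Complex.exp lq = q) (h0 : 0 < ‖q‖) (h1 : ‖q‖ < 1)
    (l : ℕ) (u : ℂ)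
    (hr1 : rhoLPlusU q lq l u ≠ 0) (hr2 : rhoLPlusU q lq l (u - 1) ≠ 0) :
    phiLPlus q lq l u * phiLPlus q lq l (u - 1)
      = br lq (u - ((l : ℂ) + 1) / 2) * br lq (u + ((l : ℂ) + 1) / 2) := by
  have hq0 : q ≠ 0 := by rw [← hq]; exact Complex.exp_ne_zero lq
  have hx : ‖q ^ 4‖ < 1 := by
    rw [norm_pow]; exact pow_lt_one₀ (norm_nonneg q) h1 (by norm_num)
  have hs0 : Complex.exp (lq / 2) ≠ 0 := Complex.exp_ne_zero _
  have ht0 : Complex.exp (u * lq) ≠ 0 := Complex.exp_ne_zero _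
  have hsq : Complex.exp (lq / 2) * Complex.exp (lq / 2) = q := by
    rw [← Complex.exp_add, ← hq]; norm_num
  have hzq2 : q ^ (2 : ℤ) = q * q := by
    rw [show (2:ℤ) = ((2:ℕ):ℤ) by norm_num, zpow_natCast, pow_two]
  have hql1 : q ^ ((l : ℤ) + 1) = Complex.exp (lq/2) ^ (l+1) * Complex.exp (lq/2) ^ (l+1) := by
    rw [show ((l:ℤ)+1) = ((l+1 : ℕ) : ℤ) by push_cast; ring, zpow_natCast, ← hsq, mul_pow]
  have hq1l : q ^ (1 - (l : ℤ))
      = q * q * (Complex.exp (lq/2) ^ (l+1) * Complex.exp (lq/2) ^ (l+1))⁻¹ := by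
    rw [show (1 - (l:ℤ)) = 2 - ((l:ℤ)+1) by ring, zpow_sub₀ hq0, hzq2, hql1, div_eq_mul_inv]
  have hw2 : (Complex.exp (2 * (u - 1) * lq))⁻¹ = q * q * (Complex.exp (2 * u * lq))⁻¹ := by
    have hkey : Complex.exp (2 * u * lq) = Complex.exp (2 * (u - 1) * lq) * (q * q) := by
      rw [← hq, ← Complex.exp_add, ← Complex.exp_add]; congr 1; ring
    field_simp
    linear_combination hkey
  -- argument identities for ρ(u-1)
  have e1 : q ^ ((l:ℤ)+3) * (Complex.exp (2*(u-1)*lq))⁻¹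
      = q ^ ((l:ℤ)+1) * (Complex.exp (2*u*lq))⁻¹ * q ^ 4 := by
    rw [hw2, show ((l:ℤ)+3) = ((l:ℤ)+1) + 2 by ring, zpow_add₀ hq0 ((l:ℤ)+1) 2, hzq2]; ring
  have e2 : q ^ (1-(l:ℤ)) * (Complex.exp (2*(u-1)*lq))⁻¹
      = q ^ (3-(l:ℤ)) * (Complex.exp (2*u*lq))⁻¹ := by
    rw [hw2, show (3-(l:ℤ)) = (1-(l:ℤ)) + 2 by ring, zpow_add₀ hq0 (1-(l:ℤ)) 2, hzq2]; ring
  have e3 : q ^ (3-(l:ℤ)) * (Complex.exp (2*(u-1)*lq))⁻¹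
      = q ^ (1-(l:ℤ)) * (Complex.exp (2*u*lq))⁻¹ * q ^ 4 := by
    rw [hw2, show (3-(l:ℤ)) = (1-(l:ℤ)) + 2 by ring, zpow_add₀ hq0 (1-(l:ℤ)) 2, hzq2]; ring
  have e4 : q ^ ((l:ℤ)+1) * (Complex.exp (2*(u-1)*lq))⁻¹
      = q ^ ((l:ℤ)+3) * (Complex.exp (2*u*lq))⁻¹ := by
    rw [hw2, show ((l:ℤ)+3) = ((l:ℤ)+1) + 2 by ring, zpow_add₀ hq0 ((l:ℤ)+1) 2, hzq2]; ring
  have hrho1 : rhoLPlusU q lq l u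
      = Complex.exp (((l:ℂ)/2) * lq) *
        pochInf (q ^ ((l:ℤ)+3) * (Complex.exp (2*u*lq))⁻¹) (q^4) *
        pochInf (q ^ (1-(l:ℤ)) * (Complex.exp (2*u*lq))⁻¹) (q^4) /
        (pochInf (q ^ (3-(l:ℤ)) * (Complex.exp (2*u*lq))⁻¹) (q^4) *
          pochInf (q ^ ((l:ℤ)+1) * (Complex.exp (2*u*lq))⁻¹) (q^4)) := rfl
  have hrho2 : rhoLPlusU q lq l (u-1)
      = Complex.exp (((l:ℂ)/2) * lq) *
        pochInf (q ^ ((l:ℤ)+1) * (Complex.exp (2*u*lq))⁻¹ * q^4) (q^4) *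
        pochInf (q ^ (3-(l:ℤ)) * (Complex.exp (2*u*lq))⁻¹) (q^4) /
        (pochInf (q ^ (1-(l:ℤ)) * (Complex.exp (2*u*lq))⁻¹ * q^4) (q^4) *
          pochInf (q ^ ((l:ℤ)+3) * (Complex.exp (2*u*lq))⁻¹) (q^4)) := by
    rw [rhoLPlusU, e1, e2, e3, e4]
  have hrr : rhoLPlusU q lq l u * rhoLPlusU q lq l (u-1) ≠ 0 := mul_ne_zero hr1 hr2
  rw [hrho1] at hr1
  rw [hrho2] at hr2
  obtain ⟨hn1, hd1⟩ := div_ne_zero_iff.mp hr1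
  obtain ⟨hn2, hd2⟩ := div_ne_zero_iff.mp hr2
  have hPA := (mul_ne_zero_iff.mp (mul_ne_zero_iff.mp hn1).1).2
  have hPB := (mul_ne_zero_iff.mp hn1).2
  have hPC := (mul_ne_zero_iff.mp hd1).1
  have hPD := (mul_ne_zero_iff.mp hd1).2
  have hPDq := (mul_ne_zero_iff.mp (mul_ne_zero_iff.mp hn2).1).2
  have hPBq := (mul_ne_zero_iff.mp hd2).1
  have hstepB := poch_step (q ^ (1-(l:ℤ)) * (Complex.exp (2*u*lq))⁻¹) (q^4) hx
  have hstepD := poch_step (q ^ ((l:ℤ)+1) * (Complex.exp (2*u*lq))⁻¹) (q^4) hx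
  have h1B : (1 - q ^ (1-(l:ℤ)) * (Complex.exp (2*u*lq))⁻¹) ≠ 0 := by
    intro h; exact hPB (by rw [hstepB, h, zero_mul])
  have h1D : (1 - q ^ ((l:ℤ)+1) * (Complex.exp (2*u*lq))⁻¹) ≠ 0 := by
    intro h; exact hPD (by rw [hstepD, h, zero_mul])
  have hprod : rhoLPlusU q lq l u * rhoLPlusU q lq l (u-1)
      = Complex.exp (((l:ℂ)/2) * lq) * Complex.exp (((l:ℂ)/2) * lq) *
        (1 - q ^ (1-(l:ℤ)) * (Complex.exp (2*u*lq))⁻¹) /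
        (1 - q ^ ((l:ℤ)+1) * (Complex.exp (2*u*lq))⁻¹) := by
    rw [hrho1, hrho2, hstepB, hstepD]
    set E := Complex.exp (((l:ℂ)/2) * lq) with hE
    set PA := pochInf (q ^ ((l:ℤ)+3) * (Complex.exp (2*u*lq))⁻¹) (q^4) with hPAd
    set PC := pochInf (q ^ (3-(l:ℤ)) * (Complex.exp (2*u*lq))⁻¹) (q^4) with hPCd
    set PBq := pochInf (q ^ (1-(l:ℤ)) * (Complex.exp (2*u*lq))⁻¹ * q^4) (q^4) with hPBqd
    set PDq := pochInf (q ^ ((l:ℤ)+1) * (Complex.exp (2*u*lq))⁻¹ * q^4) (q^4) with hPDqd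
    set eB := 1 - q ^ (1-(l:ℤ)) * (Complex.exp (2*u*lq))⁻¹ with heB
    set eD := 1 - q ^ ((l:ℤ)+1) * (Complex.exp (2*u*lq))⁻¹ with heD
    field_simp
  -- exponential monomial computations
  have hE1 : Complex.exp ((u + ((l:ℂ)+1)/2) * lq)
      = Complex.exp (u*lq) * Complex.exp (lq/2) ^ (l+1) := by
    rw [show (u + ((l:ℂ)+1)/2) * lq = u * lq + ((l+1 : ℕ) : ℂ) * (lq/2) by push_cast; ring,
      Complex.exp_add, Complex.exp_nat_mul]
  have hE1' : Complex.exp (-(u + ((l:ℂ)+1)/2) * lq)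
      = (Complex.exp (u*lq) * Complex.exp (lq/2) ^ (l+1))⁻¹ := by
    rw [show -(u + ((l:ℂ)+1)/2) * lq = -((u + ((l:ℂ)+1)/2) * lq) by ring,
      Complex.exp_neg, hE1]
  have hE2 : Complex.exp ((u - 1 + ((l:ℂ)+1)/2) * lq)
      = Complex.exp (u*lq) * Complex.exp (lq/2) ^ (l+1) / q := by
    rw [show (u - 1 + ((l:ℂ)+1)/2) * lq
        = u * lq + ((l+1 : ℕ) : ℂ) * (lq/2) - lq by push_cast; ring,
      Complex.exp_sub, Complex.exp_add, Complex.exp_nat_mul, hq]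
  have hE2' : Complex.exp (-(u - 1 + ((l:ℂ)+1)/2) * lq)
      = (Complex.exp (u*lq) * Complex.exp (lq/2) ^ (l+1) / q)⁻¹ := by
    rw [show -(u - 1 + ((l:ℂ)+1)/2) * lq = -((u - 1 + ((l:ℂ)+1)/2) * lq) by ring,
      Complex.exp_neg, hE2]
  have hE3 : Complex.exp ((u - ((l:ℂ)+1)/2) * lq)
      = Complex.exp (u*lq) / Complex.exp (lq/2) ^ (l+1) := by
    rw [show (u - ((l:ℂ)+1)/2) * lq = u * lq - ((l+1 : ℕ) : ℂ) * (lq/2) by push_cast; ring,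
      Complex.exp_sub, Complex.exp_nat_mul]
  have hE3' : Complex.exp (-(u - ((l:ℂ)+1)/2) * lq)
      = (Complex.exp (u*lq) / Complex.exp (lq/2) ^ (l+1))⁻¹ := by
    rw [show -(u - ((l:ℂ)+1)/2) * lq = -((u - ((l:ℂ)+1)/2) * lq) by ring,
      Complex.exp_neg, hE3]
  have hel : Complex.exp (((l:ℂ)/2) * lq) = Complex.exp (lq/2) ^ l := by
    rw [show ((l:ℂ)/2) * lq = ((l : ℕ) : ℂ) * (lq/2) by push_cast; ring,
      Complex.exp_nat_mul]
  have hww : Complex.exp (2*u*lq) = Complex.exp (u*lq) * Complex.exp (u*lq) := by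
    rw [← Complex.exp_add]; congr 1; ring
  -- assemble
  simp only [phiLPlus]
  rw [show (-(rhoLPlusU q lq l u)⁻¹ * br lq (u + ((l:ℂ)+1)/2)) *
        (-(rhoLPlusU q lq l (u-1))⁻¹ * br lq (u - 1 + ((l:ℂ)+1)/2))
      = (rhoLPlusU q lq l u * rhoLPlusU q lq l (u-1))⁻¹ *
        (br lq (u + ((l:ℂ)+1)/2) * br lq (u - 1 + ((l:ℂ)+1)/2)) by rw [mul_inv]; ring]
  rw [inv_mul_eq_iff_eq_mul₀ hrr, hprod, div_mul_eq_mul_div, eq_div_iff h1D]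
  simp only [br]
  rw [hE1, hE1', hE2, hE2', hE3, hE3', hel, hq1l, hql1, hww, ← hsq]
  have hP : Complex.exp (lq/2) ^ l ≠ 0 := pow_ne_zero _ hs0
  simp only [pow_succ]
  generalize Complex.exp (lq/2) ^ l = P at hP ⊢
  field_simp
  ring
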